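/- arXiv:1105.1508 — 5 statements merged into one kernel-verified Lean document; each statement's English description precedes it below -/
import Mathlib

section
/- If the n×N matrix Φ with entries Φ_{ik} = φ_i(x_k) has rank n, then L(θ) = (1/N) Σ_k w_k [log(p(x_k)/q_θ(x_k)) − 1 + q_θ(x_k)/p(x_k)], with q_θ(x) = exp(⟨θ, φ(x)⟩), is a strictly convex function of θ on ℝ^n. -/
open scoped BigOperators
open Matrix

private lemma vs_aux_strict (w p a b u v C : ℝ) (hw : 0 < w) (hp : 0 < p)
    (ha : 0 < a) (hb : 0 < b) (hab : a + b = 1) (huv : u ≠ v) :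
    w * (C - (a * u + b * v) - 1 + Real.exp (a * u + b * v) / p) <
      a * (w * (C - u - 1 + Real.exp u / p)) + b * (w * (C - v - 1 + Real.exp v / p)) := by
  have hexp : Real.exp (a * u + b * v) < a * Real.exp u + b * Real.exp v := by
    have := strictConvexOn_exp.2 (Set.mem_univ u) (Set.mem_univ v) huv ha hb hab
    simpa [smul_eq_mul] using this
  have hb' : b = 1 - a := by linarith
  subst hb'
  have key : a * (w * (C - u - 1 + Real.exp u / p)) + (1 - a) * (w * (C - v - 1 + Real.exp v / p))
      - w * (C - (a * u + (1 - a) * v) - 1 + Real.exp (a * u + (1 - a) * v) / p)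
      = (w / p) * ((a * Real.exp u + (1 - a) * Real.exp v) - Real.exp (a * u + (1 - a) * v)) := by
    field_simp
    ring
  nlinarith [mul_pos hw hp, div_pos hw hp,
    mul_lt_mul_of_pos_left hexp (div_pos hw hp)]

private lemma vs_aux_le (w p a b u v C : ℝ) (hw : 0 < w) (hp : 0 < p)
    (ha : 0 < a) (hb : 0 < b) (hab : a + b = 1) :
    w * (C - (a * u + b * v) - 1 + Real.exp (a * u + b * v) / p) ≤
      a * (w * (C - u - 1 + Real.exp u / p)) + b * (w * (C - v - 1 + Real.exp v / p)) := by
  have hexp : Real.exp (a * u + b * v) ≤ a * Real.exp u + b * Real.exp v := by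
    have := convexOn_exp.2 (Set.mem_univ u) (Set.mem_univ v) ha.le hb.le hab
    simpa [smul_eq_mul] using this
  have hb' : b = 1 - a := by linarith
  subst hb'
  have key : a * (w * (C - u - 1 + Real.exp u / p)) + (1 - a) * (w * (C - v - 1 + Real.exp v / p))
      - w * (C - (a * u + (1 - a) * v) - 1 + Real.exp (a * u + (1 - a) * v) / p)
      = (w / p) * ((a * Real.exp u + (1 - a) * Real.exp v) - Real.exp (a * u + (1 - a) * v)) := by
    field_simp
    ring
  nlinarith [mul_le_mul_of_nonneg_left hexp (div_pos hw hp).le]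

/-- If the `n×N` matrix `Φ` with entries `Φ_{ik} = φ_i(x_k)` has rank `n`, then the
variational sampling cost `L(θ)` is a strictly convex function of `θ` on `ℝ^n`. -/
theorem vs_cost_strictConvex {d n N : ℕ}
    (φ : (Fin d → ℝ) → Fin n → ℝ) (x : Fin N → (Fin d → ℝ))
    (p : (Fin d → ℝ) → ℝ) (w : Fin N → ℝ)
    (hp : ∀ k, 0 < p (x k)) (hw : ∀ k, 0 < w k)
    (q : (Fin n → ℝ) → (Fin d → ℝ) → ℝ)
    (hq : ∀ θ x', q θ x' = Real.exp (∑ i, θ i * φ x' i))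
    (L : (Fin n → ℝ) → ℝ)
    (hL : ∀ θ, L θ =
      (1 / (N : ℝ)) * ∑ k, w k * (Real.log (p (x k) / q θ (x k)) - 1 + q θ (x k) / p (x k)))
    (Φ : Matrix (Fin n) (Fin N) ℝ) (hΦ : ∀ i k, Φ i k = φ (x k) i)
    (hrank : Φ.rank = n) :
    StrictConvexOn ℝ Set.univ L := by
  -- injectivity of θ ↦ (⟨θ, φ(x k)⟩)_k
  have hinj : Function.Injective ((Matrix.mulVecLin Φᵀ)) := by
    rw [← LinearMap.ker_eq_bot]
    have hrk : Φᵀ.rank = n := by rw [Matrix.rank_transpose]; exact hrank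
    have h1 := LinearMap.finrank_range_add_finrank_ker ((Matrix.mulVecLin Φᵀ))
    rw [show Module.finrank ℝ (LinearMap.range (Matrix.mulVecLin Φᵀ)) = n from hrk] at h1
    have h2 : Module.finrank ℝ (Fin n → ℝ) = n := Module.finrank_fin_fun ℝ
    rw [h2] at h1
    have h3 : Module.finrank ℝ (LinearMap.ker (Matrix.mulVecLin Φᵀ)) = 0 := by omega
    exact Submodule.finrank_eq_zero.mp h3
  have key : ∀ θ₁ θ₂ : Fin n → ℝ, θ₁ ≠ θ₂ →
      ∃ k, (∑ i, θ₁ i * φ (x k) i) ≠ (∑ i, θ₂ i * φ (x k) i) := by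
    intro θ₁ θ₂ hne
    by_contra h
    push_neg at h
    apply hne
    apply hinj
    funext k
    simp only [Matrix.mulVecLin_apply, Matrix.mulVec, dotProduct, Matrix.transpose_apply]
    simp only [hΦ]
    have := h k
    calc (∑ i, φ (x k) i * θ₁ i) = ∑ i, θ₁ i * φ (x k) i := by
          exact Finset.sum_congr rfl fun i _ => mul_comm _ _
      _ = ∑ i, θ₂ i * φ (x k) i := this
      _ = ∑ i, φ (x k) i * θ₂ i := Finset.sum_congr rfl fun i _ => mul_comm _ _
  -- rewrite L explicitly
  have hLval : ∀ θ, L θ = (1 / (N : ℝ)) * ∑ k, w k *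
      (Real.log (p (x k)) - (∑ i, θ i * φ (x k) i) - 1
        + Real.exp (∑ i, θ i * φ (x k) i) / p (x k)) := by
    intro θ
    rw [hL]
    congr 1
    refine Finset.sum_congr rfl fun k _ => ?_
    rw [hq, Real.log_div (ne_of_gt (hp k)) (Real.exp_ne_zero _), Real.log_exp]
  constructor
  · exact convex_univ
  intro θ₁ _ θ₂ _ hne a b ha hb hab
  obtain ⟨k₀, hk₀⟩ := key θ₁ θ₂ hne
  have hN : (0 : ℝ) < (N : ℝ) := by
    have : 0 < N := k₀.pos
    exact_mod_cast this
  have hcomb : ∀ k, (∑ i, (a • θ₁ + b • θ₂) i * φ (x k) i)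
      = a * (∑ i, θ₁ i * φ (x k) i) + b * (∑ i, θ₂ i * φ (x k) i) := by
    intro k
    simp only [Pi.add_apply, Pi.smul_apply, smul_eq_mul, add_mul,
      Finset.sum_add_distrib, Finset.mul_sum, mul_assoc]
  have hsum : (∑ k, w k * (Real.log (p (x k)) - (∑ i, (a • θ₁ + b • θ₂) i * φ (x k) i) - 1
        + Real.exp (∑ i, (a • θ₁ + b • θ₂) i * φ (x k) i) / p (x k)))
      < ∑ k, (a * (w k * (Real.log (p (x k)) - (∑ i, θ₁ i * φ (x k) i) - 1
            + Real.exp (∑ i, θ₁ i * φ (x k) i) / p (x k)))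
          + b * (w k * (Real.log (p (x k)) - (∑ i, θ₂ i * φ (x k) i) - 1
            + Real.exp (∑ i, θ₂ i * φ (x k) i) / p (x k)))) := by
    apply Finset.sum_lt_sum
    · intro k _
      rw [hcomb k]
      exact vs_aux_le _ _ _ _ _ _ _ (hw k) (hp k) ha hb hab
    · refine ⟨k₀, Finset.mem_univ _, ?_⟩
      rw [hcomb k₀]
      exact vs_aux_strict _ _ _ _ _ _ _ (hw k₀) (hp k₀) ha hb hab hk₀
  rw [hLval, hLval, hLval]
  rw [Finset.sum_add_distrib, ← Finset.mul_sum, ← Finset.mul_sum] at hsum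
  have h1N : (0:ℝ) < 1 / (N:ℝ) := by positivity
  calc (1 / (N:ℝ)) * ∑ k, w k * (Real.log (p (x k))
          - (∑ i, (a • θ₁ + b • θ₂) i * φ (x k) i) - 1
          + Real.exp (∑ i, (a • θ₁ + b • θ₂) i * φ (x k) i) / p (x k))
      < (1 / (N:ℝ)) * (a * (∑ k, w k * (Real.log (p (x k)) - (∑ i, θ₁ i * φ (x k) i) - 1
            + Real.exp (∑ i, θ₁ i * φ (x k) i) / p (x k)))
          + b * (∑ k, w k * (Real.log (p (x k)) - (∑ i, θ₂ i * φ (x k) i) - 1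
            + Real.exp (∑ i, θ₂ i * φ (x k) i) / p (x k)))) :=
        mul_lt_mul_of_pos_left hsum h1N
    _ = _ := by simp only [smul_eq_mul]; ring
end

section
/- If the n×N matrix Φ with entries Φ_{ik} = φ_i(x_k) has rank n, then the cost L(θ) = (1/N) Σ_k w_k [log(p(x_k)/q_θ(x_k)) − 1 + q_θ(x_k)/p(x_k)], with q_θ(x) = exp(⟨θ, φ(x)⟩), is coercive: L(θ) → +∞ as ‖θ‖ → +∞. -/
open scoped BigOperators

/-- Elementary pointwise bound: `log P - t - 1 + exp t / P ≥ |t| - (4P + 1 - log P)`. -/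
lemma vs_pointwise_bound (t P : ℝ) (hP : 0 < P) :
    |t| - (4 * P + 1 - Real.log P) ≤ Real.log P - t - 1 + Real.exp t / P := by
  rcases le_or_gt t 0 with ht | ht
  · rw [abs_of_nonpos ht]
    have h1 : 0 < Real.exp t / P := div_pos (Real.exp_pos t) hP
    nlinarith
  · rw [abs_of_pos ht]
    have h1 : (1 + t / 2) ^ 2 ≤ Real.exp t := by
      have h2 : Real.exp t = Real.exp (t / 2) * Real.exp (t / 2) := by
        rw [← Real.exp_add]; ring_nf
      have h3 : t / 2 + 1 ≤ Real.exp (t / 2) := Real.add_one_le_exp (t / 2)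
      have h4 : 0 ≤ 1 + t / 2 := by linarith
      nlinarith [Real.exp_pos (t / 2)]
    have h5 : 2 * P * t - 4 * P ^ 2 ≤ Real.exp t := by
      nlinarith [sq_nonneg (t / 2 + 1 - 2 * P)]
    have h6 : 2 * t - 4 * P ≤ Real.exp t / P := by
      rw [le_div_iff₀ hP]
      nlinarith
    linarith

/-- If the `n×N` matrix `Φ` with entries `Φ_{ik} = φ_i(x_k)` has rank `n`, then the
variational sampling cost `L` is coercive: `L(θ) → +∞` as `‖θ‖ → +∞`. -/
theorem vs_cost_coercive {d n N : ℕ}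
    (φ : (Fin d → ℝ) → Fin n → ℝ) (x : Fin N → (Fin d → ℝ))
    (p : (Fin d → ℝ) → ℝ) (w : Fin N → ℝ)
    (hp : ∀ k, 0 < p (x k)) (hw : ∀ k, 0 < w k)
    (q : (Fin n → ℝ) → (Fin d → ℝ) → ℝ)
    (hq : ∀ θ x', q θ x' = Real.exp (∑ i, θ i * φ x' i))
    (L : (Fin n → ℝ) → ℝ)
    (hL : ∀ θ, L θ =
      (1 / (N : ℝ)) * ∑ k, w k * (Real.log (p (x k) / q θ (x k)) - 1 + q θ (x k) / p (x k)))
    (Φ : Matrix (Fin n) (Fin N) ℝ) (hΦ : ∀ i k, Φ i k = φ (x k) i)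
    (hrank : Φ.rank = n) :
    Filter.Tendsto L (Filter.comap (fun θ : Fin n → ℝ => ‖θ‖) Filter.atTop)
      Filter.atTop := by
  classical
  rcases Nat.eq_zero_or_pos n with hn | hn
  · -- trivial case: the domain is a point, the filter is ⊥
    subst hn
    have hbot : Filter.comap (fun θ : Fin 0 → ℝ => ‖θ‖) Filter.atTop = ⊥ := by
      rw [← Filter.empty_mem_iff_bot]
      refine Filter.mem_comap.2 ⟨Set.Ici 1, Filter.mem_atTop 1, ?_⟩
      intro θ hθ
      simp only [Set.mem_preimage, Set.mem_Ici] at hθ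
      have hθ0 : θ = 0 := Subsingleton.elim _ _
      rw [hθ0, norm_zero] at hθ
      linarith
    rw [hbot]
    exact Filter.tendsto_bot
  -- main case
  have hNn : n ≤ N := by
    have := Φ.rank_le_card_width
    rwa [hrank, Fintype.card_fin] at this
  have hN : 0 < N := lt_of_lt_of_le hn hNn
  haveI : Nonempty (Fin N) := ⟨⟨0, hN⟩⟩
  have hNe : Finset.univ.Nonempty (α := Fin N) := Finset.univ_nonempty
  -- rows of Φ are linearly independent, so vecMul is injective
  have hli : LinearIndependent ℝ (fun i => Φ i) := by
    rw [Matrix.rank_eq_finrank_span_row] at hrank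
    rw [linearIndependent_iff_card_eq_finrank_span, Fintype.card_fin, Set.finrank]
    exact hrank.symm
  have hker : LinearMap.ker Φ.vecMulLinear = ⊥ := by
    rw [LinearMap.ker_eq_bot, Matrix.coe_vecMulLinear]
    exact Matrix.vecMul_injective_iff.mpr hli
  obtain ⟨K, hK0, hKa⟩ := Φ.vecMulLinear.exists_antilipschitzWith hker
  have hK0' : (0 : ℝ) < (K : ℝ) := by exact_mod_cast hK0
  set a : ℝ := Finset.univ.inf' hNe w with ha
  have ha0 : 0 < a := by
    rw [ha, Finset.lt_inf'_iff]
    exact fun k _ => hw k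
  set B : ℝ := ∑ k, w k * (4 * p (x k) + 1 - Real.log (p (x k))) with hB
  -- the key lower bound
  have key : ∀ θ : Fin n → ℝ,
      (1 / (N : ℝ)) * (a / K * ‖θ‖ - B) ≤ L θ := by
    intro θ
    set s : Fin N → ℝ := fun k => ∑ i, θ i * φ (x k) i with hs
    have hsvm : Φ.vecMulLinear θ = s := by
      funext k
      simp only [Matrix.vecMulLinear_apply, Matrix.vecMul, dotProduct, hs]
      exact Finset.sum_congr rfl fun i _ => by rw [hΦ]
    -- ‖θ‖ ≤ K * ‖s‖
    have hθs : ‖θ‖ ≤ (K : ℝ) * ‖s‖ := by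
      have := hKa.le_mul_dist θ 0
      rwa [dist_zero_right, map_zero, dist_zero_right, hsvm] at this
    -- ‖s‖ ≤ ∑ |s k|
    have hsum : ‖s‖ ≤ ∑ k, |s k| := by
      refine (pi_norm_le_iff_of_nonneg (Finset.sum_nonneg fun k _ => abs_nonneg _)).2
        fun k => ?_
      rw [Real.norm_eq_abs]
      exact Finset.single_le_sum (fun j _ => abs_nonneg (s j)) (Finset.mem_univ k)
    -- per-term bound
    have hterm : ∀ k, w k * |s k| - w k * (4 * p (x k) + 1 - Real.log (p (x k))) ≤
        w k * (Real.log (p (x k) / q θ (x k)) - 1 + q θ (x k) / p (x k)) := by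
      intro k
      have hq' : q θ (x k) = Real.exp (s k) := hq θ (x k)
      have hlog : Real.log (p (x k) / q θ (x k)) = Real.log (p (x k)) - s k := by
        rw [hq', Real.log_div (hp k).ne' (Real.exp_ne_zero _), Real.log_exp]
      rw [hlog, hq', ← mul_sub]
      exact mul_le_mul_of_nonneg_left (vs_pointwise_bound (s k) (p (x k)) (hp k)) (hw k).le
    -- sum bound
    have hsum2 : a / K * ‖θ‖ - B ≤
        ∑ k, w k * (Real.log (p (x k) / q θ (x k)) - 1 + q θ (x k) / p (x k)) := by
      have h1 : a / K * ‖θ‖ ≤ a * ‖s‖ := by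
        calc a / K * ‖θ‖ ≤ a / K * ((K : ℝ) * ‖s‖) :=
              mul_le_mul_of_nonneg_left hθs (by positivity)
          _ = a * ‖s‖ := by field_simp
      have h2 : a * ‖s‖ ≤ ∑ k, w k * |s k| := by
        calc a * ‖s‖ ≤ a * ∑ k, |s k| := mul_le_mul_of_nonneg_left hsum ha0.le
          _ = ∑ k, a * |s k| := Finset.mul_sum _ _ _
          _ ≤ ∑ k, w k * |s k| := Finset.sum_le_sum fun k _ =>
              mul_le_mul_of_nonneg_right (Finset.inf'_le w (Finset.mem_univ k)) (abs_nonneg _)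
      have h3 : (∑ k, w k * |s k|) - B ≤
          ∑ k, w k * (Real.log (p (x k) / q θ (x k)) - 1 + q θ (x k) / p (x k)) := by
        rw [hB, ← Finset.sum_sub_distrib]
        exact Finset.sum_le_sum fun k _ => hterm k
      linarith
    rw [hL]
    have hN' : (0 : ℝ) < (N : ℝ) := Nat.cast_pos.mpr hN
    exact mul_le_mul_of_nonneg_left hsum2 (by positivity)
  -- conclude coercivity
  have htop : Filter.Tendsto (fun θ : Fin n → ℝ => (1 / (N : ℝ)) * (a / K * ‖θ‖ - B))
      (Filter.comap (fun θ : Fin n → ℝ => ‖θ‖) Filter.atTop) Filter.atTop := by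
    have h1 : Filter.Tendsto (fun θ : Fin n → ℝ => ‖θ‖)
        (Filter.comap (fun θ : Fin n → ℝ => ‖θ‖) Filter.atTop) Filter.atTop :=
      Filter.tendsto_comap
    have h2 : Filter.Tendsto (fun r : ℝ => (1 / (N : ℝ)) * (a / K * r - B))
        Filter.atTop Filter.atTop := by
      have hN' : (0 : ℝ) < (N : ℝ) := Nat.cast_pos.mpr hN
      have hc : (0 : ℝ) < a / K := div_pos ha0 hK0'
      have g1 : Filter.Tendsto (fun r : ℝ => a / K * r) Filter.atTop Filter.atTop :=
        Filter.Tendsto.const_mul_atTop hc Filter.tendsto_id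
      have g2 := Filter.tendsto_atTop_add_const_right Filter.atTop (-B) g1
      have g3 := g2.const_mul_atTop (show (0 : ℝ) < 1 / (N : ℝ) by positivity)
      simpa [sub_eq_add_neg] using g3
    exact h2.comp h1
  exact Filter.tendsto_atTop_mono key htop
end

section
/- (Theorem 1) If the n×N matrix Φ with entries Φ_{ik} = φ_i(x_k) has rank n, then the cost L(θ) = (1/N) Σ_k w_k [log(p(x_k)/q_θ(x_k)) − 1 + q_θ(x_k)/p(x_k)], with q_θ(x) = exp(⟨θ, φ(x)⟩), admits a unique minimizer in ℝ^n. -/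
open scoped BigOperators
open Matrix Filter

private lemma vs_exp_tangent (p s : ℝ) (hp : 0 < p) :
    |s| + min 0 (2 - 2 * Real.log (2*p)) ≤ Real.exp s / p - s := by
  have h1 : Real.exp s / p - s ≥ -s := by
    have : 0 ≤ Real.exp s / p := by positivity
    linarith
  have h2 : Real.exp s / p - s ≥ s + (2 - 2 * Real.log (2*p)) := by
    have ht := Real.add_one_le_exp (s - Real.log (2*p))
    have he : Real.exp (s - Real.log (2*p)) = Real.exp s / (2*p) := by
      rw [Real.exp_sub, Real.exp_log (by positivity)]
    rw [he] at ht
    have heq : Real.exp s / p = 2 * (Real.exp s / (2*p)) := by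
      field_simp
    linarith
  rcases abs_cases s with ⟨h, hs⟩ | ⟨h, hs⟩
  · rw [h]; have := min_le_right (0:ℝ) (2 - 2*Real.log (2*p)); linarith
  · rw [h]; have := min_le_left (0:ℝ) (2 - 2*Real.log (2*p)); linarith

private lemma vs_conv_le (wk pk a b : ℝ) (hwk : 0 < wk) (hpk : 0 < pk) :
    wk * (Real.log pk - (a+b)/2 - 1 + Real.exp ((a+b)/2) / pk) ≤
      (wk * (Real.log pk - a - 1 + Real.exp a / pk)
        + wk * (Real.log pk - b - 1 + Real.exp b / pk))/2 := by
  have hE : Real.exp ((a+b)/2) ≤ (Real.exp a + Real.exp b)/2 := by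
    have := convexOn_exp.2 (Set.mem_univ a) (Set.mem_univ b)
      (by norm_num : (0:ℝ) ≤ 1/2) (by norm_num : (0:ℝ) ≤ 1/2) (by norm_num)
    simp only [smul_eq_mul] at this
    have h2 : (a+b)/2 = 1/2*a+1/2*b := by ring
    rw [h2]; linarith
  have hE2 : Real.exp ((a+b)/2) / pk ≤ ((Real.exp a + Real.exp b)/2) / pk :=
    div_le_div_of_nonneg_right hE hpk.le
  have hE3 := mul_le_mul_of_nonneg_left hE2 hwk.le
  have hid : ((Real.exp a + Real.exp b)/2) / pk = (Real.exp a / pk + Real.exp b / pk)/2 := by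
    ring
  rw [hid] at hE3
  nlinarith [hE3]

private lemma vs_conv_lt (wk pk a b : ℝ) (hwk : 0 < wk) (hpk : 0 < pk) (hab : a ≠ b) :
    wk * (Real.log pk - (a+b)/2 - 1 + Real.exp ((a+b)/2) / pk) <
      (wk * (Real.log pk - a - 1 + Real.exp a / pk)
        + wk * (Real.log pk - b - 1 + Real.exp b / pk))/2 := by
  have hE : Real.exp ((a+b)/2) < (Real.exp a + Real.exp b)/2 := by
    have := strictConvexOn_exp.2 (Set.mem_univ a) (Set.mem_univ b) hab
      (by norm_num : (0:ℝ) < 1/2) (by norm_num : (0:ℝ) < 1/2) (by norm_num)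
    simp only [smul_eq_mul] at this
    have h2 : (a+b)/2 = 1/2*a+1/2*b := by ring
    rw [h2]; linarith
  have hE2 : Real.exp ((a+b)/2) / pk < ((Real.exp a + Real.exp b)/2) / pk :=
    div_lt_div_of_pos_right hE hpk
  have hE3 := mul_lt_mul_of_pos_left hE2 hwk
  have hid : ((Real.exp a + Real.exp b)/2) / pk = (Real.exp a / pk + Real.exp b / pk)/2 := by
    ring
  rw [hid] at hE3
  nlinarith [hE3]

/-- (Theorem 1) If the `n×N` matrix `Φ` with entries `Φ_{ik} = φ_i(x_k)` has rank `n`,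
then the variational sampling cost `L(θ)` admits a unique minimizer in `ℝ^n`. -/
theorem vs_cost_unique_minimizer {d n N : ℕ}
    (φ : (Fin d → ℝ) → Fin n → ℝ) (x : Fin N → (Fin d → ℝ))
    (p : (Fin d → ℝ) → ℝ) (w : Fin N → ℝ)
    (hp : ∀ k, 0 < p (x k)) (hw : ∀ k, 0 < w k)
    (q : (Fin n → ℝ) → (Fin d → ℝ) → ℝ)
    (hq : ∀ θ x', q θ x' = Real.exp (∑ i, θ i * φ x' i))
    (L : (Fin n → ℝ) → ℝ)
    (hL : ∀ θ, L θ =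
      (1 / (N : ℝ)) * ∑ k, w k * (Real.log (p (x k) / q θ (x k)) - 1 + q θ (x k) / p (x k)))
    (Φ : Matrix (Fin n) (Fin N) ℝ) (hΦ : ∀ i k, Φ i k = φ (x k) i)
    (hrank : Φ.rank = n) :
    ∃! θmin : Fin n → ℝ, ∀ θ : Fin n → ℝ, L θmin ≤ L θ := by
  rcases Nat.eq_zero_or_pos n with hn | hn
  · subst hn
    refine ⟨fun _ => 0, fun θ => le_of_eq (congrArg L (Subsingleton.elim _ _)),
      fun y _ => Subsingleton.elim _ _⟩
  have hN : 0 < N := by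
    have h := Φ.rank_le_card_width
    simp only [Fintype.card_fin] at h
    omega
  haveI : Nonempty (Fin N) := Fin.pos_iff_nonempty.mp hN
  set T : (Fin n → ℝ) →ₗ[ℝ] (Fin N → ℝ) := Φᵀ.mulVecLin with hT
  have hTapp : ∀ θ k, T θ k = ∑ i, θ i * φ (x k) i := by
    intro θ k
    simp only [hT, Matrix.mulVecLin_apply, Matrix.mulVec, dotProduct,
      Matrix.transpose_apply]
    exact Finset.sum_congr rfl fun i _ => by rw [hΦ, mul_comm]
  have hinj : Function.Injective T := by
    rw [← LinearMap.ker_eq_bot]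
    have h1 : Φᵀ.rank = n := by rw [Matrix.rank_transpose]; exact hrank
    have h2 := LinearMap.finrank_range_add_finrank_ker Φᵀ.mulVecLin
    rw [Module.finrank_pi] at h2
    simp only [Fintype.card_fin] at h2
    have h3 : Module.finrank ℝ (LinearMap.range Φᵀ.mulVecLin) = n := h1
    have hk : Module.finrank ℝ (LinearMap.ker Φᵀ.mulVecLin) = 0 := by omega
    exact Submodule.finrank_eq_zero.mp hk
  have hL' : ∀ θ, L θ = (1/(N:ℝ)) * ∑ k,
      w k * (Real.log (p (x k)) - T θ k - 1 + Real.exp (T θ k) / p (x k)) := by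
    intro θ
    rw [hL]
    congr 1
    refine Finset.sum_congr rfl fun k _ => ?_
    rw [hq, ← hTapp θ k, Real.log_div (hp k).ne' (Real.exp_ne_zero _), Real.log_exp]
  have hTc : Continuous T := T.continuous_of_finiteDimensional
  have hLc : Continuous L := by
    have hfe : L = fun θ => (1/(N:ℝ)) * ∑ k,
        w k * (Real.log (p (x k)) - T θ k - 1 + Real.exp (T θ k) / p (x k)) := funext hL'
    rw [hfe]
    refine continuous_const.mul (continuous_finset_sum _ fun k _ => continuous_const.mul ?_)
    have hk : Continuous fun θ => T θ k := (continuous_apply k).comp hTc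
    exact (((continuous_const.sub hk).sub continuous_const).add
      ((Real.continuous_exp.comp hk).div_const _))
  -- minimum of weights
  obtain ⟨ε, hε, hεw⟩ : ∃ ε > 0, ∀ k, ε ≤ w k := by
    refine ⟨Finset.univ.inf' Finset.univ_nonempty w, ?_,
      fun k => Finset.inf'_le _ (Finset.mem_univ k)⟩
    obtain ⟨k, -, hk⟩ := Finset.exists_mem_eq_inf' Finset.univ_nonempty w
    rw [hk]; exact hw k
  set dd : Fin N → ℝ := fun k =>
    w k * (Real.log (p (x k)) - 1 + min 0 (2 - 2 * Real.log (2 * p (x k)))) with hdd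
  have hbound : ∀ k s, w k * |s| + dd k ≤
      w k * (Real.log (p (x k)) - s - 1 + Real.exp s / p (x k)) := by
    intro k s
    have key := vs_exp_tangent (p (x k)) s (hp k)
    have h2 := mul_le_mul_of_nonneg_left key (hw k).le
    simp only [hdd]
    nlinarith [h2]
  -- coercivity
  have hcoer : Tendsto L (cocompact _) atTop := by
    have hce : Topology.IsClosedEmbedding T :=
      LinearMap.isClosedEmbedding_of_injective (LinearMap.ker_eq_bot.mpr hinj)
    have h1 : Tendsto (fun θ => ‖T θ‖) (cocompact _) atTop :=
      tendsto_norm_cocompact_atTop.comp hce.tendsto_cocompact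
    have h2 : Tendsto (fun θ => (1/(N:ℝ)) * (ε * ‖T θ‖ + ∑ k, dd k)) (cocompact _) atTop := by
      apply Tendsto.const_mul_atTop (by positivity : (0:ℝ) < 1/(N:ℝ))
      exact tendsto_atTop_add_const_right _ _ (h1.const_mul_atTop hε)
    refine tendsto_atTop_mono (fun θ => ?_) h2
    rw [hL']
    have hB : ε * ‖T θ‖ ≤ ∑ k, w k * |T θ k| := by
      have hnorm : ‖T θ‖ ≤ ∑ k, |T θ k| := by
        refine (pi_norm_le_iff_of_nonneg (by positivity)).mpr fun k => ?_
        rw [Real.norm_eq_abs]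
        exact Finset.single_le_sum (f := fun j => |T θ j|) (fun j _ => abs_nonneg _)
          (Finset.mem_univ k)
      calc ε * ‖T θ‖ ≤ ε * ∑ k, |T θ k| := mul_le_mul_of_nonneg_left hnorm hε.le
        _ = ∑ k, ε * |T θ k| := Finset.mul_sum _ _ _
        _ ≤ ∑ k, w k * |T θ k| :=
            Finset.sum_le_sum fun k _ => mul_le_mul_of_nonneg_right (hεw k) (abs_nonneg _)
    have hsum : ε * ‖T θ‖ + ∑ k, dd k ≤
        ∑ k, w k * (Real.log (p (x k)) - T θ k - 1 + Real.exp (T θ k) / p (x k)) := by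
      calc ε * ‖T θ‖ + ∑ k, dd k ≤ (∑ k, w k * |T θ k|) + ∑ k, dd k := by linarith
        _ = ∑ k, (w k * |T θ k| + dd k) := (Finset.sum_add_distrib).symm
        _ ≤ _ := Finset.sum_le_sum fun k _ => hbound k (T θ k)
    exact mul_le_mul_of_nonneg_left hsum (by positivity)
  obtain ⟨θ₀, hθ₀⟩ := hLc.exists_forall_le hcoer
  refine ⟨θ₀, hθ₀, fun θ₁ hθ₁ => ?_⟩
  by_contra hne
  set μ : Fin n → ℝ := fun i => (θ₁ i + θ₀ i)/2 with hμ
  have hμeq : μ = (1/2:ℝ) • θ₁ + (1/2:ℝ) • θ₀ := by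
    funext i; simp [hμ]; ring
  have hμT : ∀ k, T μ k = (T θ₁ k + T θ₀ k)/2 := by
    intro k
    rw [hμeq]
    simp only [map_add, LinearMap.map_smul, Pi.add_apply, Pi.smul_apply, smul_eq_mul]
    ring
  obtain ⟨k₀, hk₀⟩ : ∃ k, T θ₁ k ≠ T θ₀ k := by
    by_contra h
    push_neg at h
    exact hne (hinj (funext h))
  have hsum : ∑ k, w k * (Real.log (p (x k)) - T μ k - 1 + Real.exp (T μ k) / p (x k)) <
      ∑ k, ((w k * (Real.log (p (x k)) - T θ₁ k - 1 + Real.exp (T θ₁ k) / p (x k))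
        + w k * (Real.log (p (x k)) - T θ₀ k - 1 + Real.exp (T θ₀ k) / p (x k)))/2) := by
    refine Finset.sum_lt_sum (fun k _ => ?_) ⟨k₀, Finset.mem_univ k₀, ?_⟩
    · rw [hμT k]
      exact vs_conv_le (w k) (p (x k)) (T θ₁ k) (T θ₀ k) (hw k) (hp k)
    · rw [hμT k₀]
      exact vs_conv_lt (w k₀) (p (x k₀)) (T θ₁ k₀) (T θ₀ k₀) (hw k₀) (hp k₀) hk₀
  have hLμ : L μ < (L θ₁ + L θ₀)/2 := by
    rw [hL' μ, hL' θ₁, hL' θ₀]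
    have h3 := mul_lt_mul_of_pos_left hsum (by positivity : (0:ℝ) < 1/(N:ℝ))
    rw [← Finset.sum_div, Finset.sum_add_distrib] at h3
    nlinarith [h3]
  have hEq : L θ₁ = L θ₀ := le_antisymm (hθ₁ θ₀) (hθ₀ θ₁)
  have := hθ₀ μ
  rw [hEq] at hLμ
  linarith
end

section
/- Let p be a nonnegative integrable function on ℝ^d with Z_p = ∫ p, let φ : ℝ^d → ℝ^n, and let Q be the family of functions q_θ(x) = exp(⟨θ, φ(x)⟩), θ ∈ ℝ^n, assumed closed under multiplication by positive constants (e.g., the constant function 1 lies in the span of φ₁,…,φₙ). Assume all the integrals below are finite. Then θ* minimizes θ ↦ D*(p‖q_θ) over ℝ^n if and only if θ* minimizes θ ↦ D(p‖q_θ) = ∫ p log(p/q_θ) subject to the constraint ∫ q_θ = Z_p and moreover satisfies ∫ q_{θ*} = Z_p. -/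
open MeasureTheory Real

/-!
Multiplying `q_θ` by a constant `c > 0` moves `D(p‖q_θ)` by `-Z_p log c` and `∫ q_θ` by the
factor `c`. Along such a ray `D*` is, up to a constant, `c ↦ c ∫ q_θ - Z_p log c`, whose
minimum sits exactly at `c ∫ q_θ = Z_p` (strict concavity of `log`). So a minimizer of `D*`
is normalized, and on normalized parameters `D*` and `D` differ by a constant; conversely,
rescaling any `θ` to `∫ q_θ = Z_p` does not increase `D*`, by `Z - I ≤ Z log (Z / I)`.
-/

theorem eq_of_forall_le_mul_sub_mul_log {a b : ℝ} (ha : 0 < a)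
    (h : ∀ c, 0 < c → a ≤ c * a - b * log c) : a = b := by
  by_contra hab
  -- test `c = 1 / 2` if `b ≤ 0`, and the minimizer `c = b / a` of the right side otherwise
  rcases le_or_gt b 0 with hb | hb
  · have hlog : log (1 / 2) < 0 := log_neg (by norm_num) (by norm_num)
    nlinarith [h (1 / 2) (by norm_num)]
  · have hlog : log (a / b) < a / b - 1 :=
      log_lt_sub_one_of_pos (div_pos ha hb) (by rwa [ne_eq, div_eq_one_iff_eq hb.ne'])
    have hc := h (b / a) (div_pos hb ha)
    rw [div_mul_cancel₀ b ha.ne', log_div hb.ne' ha.ne'] at hc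
    rw [log_div ha.ne' hb.ne'] at hlog
    have hmul : b * (log a - log b) < b * (a / b - 1) := mul_lt_mul_of_pos_left hlog hb
    rw [mul_sub, mul_sub, mul_one, mul_div_cancel₀ a hb.ne'] at hmul
    linarith

theorem min_add_iff_constrained_min_of_rescaling {Θ : Type*} {D I : Θ → ℝ} {Z : ℝ}
    (hI : ∀ θ, 0 < I θ)
    (hrescale : ∀ θ c, 0 < c → ∃ θ', D θ' = D θ - Z * log c ∧ I θ' = c * I θ) (θstar : Θ) :
    (∀ θ, D θstar + I θstar ≤ D θ + I θ) ↔
      (I θstar = Z ∧ ∀ θ, I θ = Z → D θstar ≤ D θ) := by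
  constructor
  · intro hmin
    have hIZ : I θstar = Z := by
      refine eq_of_forall_le_mul_sub_mul_log (hI θstar) fun c hc => ?_
      obtain ⟨θ', hD', hI'⟩ := hrescale θstar c hc
      linarith [hmin θ']
    exact ⟨hIZ, fun θ hθ => by linarith [hmin θ]⟩
  · rintro ⟨hIZ, hconstr⟩ θ
    have hZ : 0 < Z := hIZ ▸ hI θstar
    obtain ⟨θ', hD', hI'⟩ := hrescale θ (Z / I θ) (div_pos hZ (hI θ))
    have hI'Z : I θ' = Z := by rw [hI', div_mul_cancel₀ Z (hI θ).ne']
    have hgibbs : Z - I θ ≤ Z * log (Z / I θ) := by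
      have hlog := mul_le_mul_of_nonneg_left (one_sub_inv_le_log_of_pos (div_pos hZ (hI θ))) hZ.le
      rwa [inv_div, mul_sub, mul_one, mul_div_cancel₀ _ hZ.ne'] at hlog
    linarith [hconstr θ' hI'Z]

theorem integral_mul_log_div_const_mul {α : Type*} [MeasurableSpace α] {μ : Measure α}
    {p q : α → ℝ} {c : ℝ} (hc : 0 < c) (hq : ∀ x, q x ≠ 0) (hp : Integrable p μ)
    (hpq : Integrable (fun x => p x * log (p x / q x)) μ) :
    ∫ x, p x * log (p x / (c * q x)) ∂μ =
      ∫ x, p x * log (p x / q x) ∂μ - (∫ x, p x ∂μ) * log c := by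
  have hpt : ∀ x, p x * log (p x / (c * q x)) = p x * log (p x / q x) - log c * p x := by
    intro x
    rcases eq_or_ne (p x) 0 with h0 | h0
    · simp [h0]
    · rw [mul_comm c, ← div_div, log_div (div_ne_zero h0 (hq x)) hc.ne']
      ring
  simp only [hpt]
  rw [integral_sub hpq (hp.const_mul _), integral_const_mul, mul_comm]

theorem genKL_min_iff_constrained_KL_min_general {d n : ℕ}
    (p : (Fin d → ℝ) → ℝ) (hp_int : Integrable p)
    (Z : ℝ) (hZ : Z = ∫ x, p x)
    (φ : (Fin d → ℝ) → Fin n → ℝ)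
    (q : (Fin n → ℝ) → (Fin d → ℝ) → ℝ)
    (hq : ∀ θ x', q θ x' = Real.exp (∑ i, θ i * φ x' i))
    -- the family is closed under multiplication by positive constants
    (hscale : ∀ θ : Fin n → ℝ, ∀ c : ℝ, 0 < c → ∃ θ' : Fin n → ℝ,
      ∀ x', q θ' x' = c * q θ x')
    -- all the integrals below are finite
    (hq_int : ∀ θ, Integrable (q θ))
    (hlog_int : ∀ θ, Integrable (fun x => p x * Real.log (p x / q θ x)))
    (D Dstar : (Fin n → ℝ) → ℝ)
    (hD : ∀ θ, D θ = ∫ x, p x * Real.log (p x / q θ x))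
    (hDstar : ∀ θ, Dstar θ = D θ - (∫ x, p x) + ∫ x, q θ x)
    (θstar : Fin n → ℝ) :
    (∀ θ : Fin n → ℝ, Dstar θstar ≤ Dstar θ) ↔
      ((∫ x, q θstar x) = Z ∧
        ∀ θ : Fin n → ℝ, (∫ x, q θ x) = Z → D θstar ≤ D θ) := by
  have hq_pos : ∀ θ x, 0 < q θ x := fun θ x => hq θ x ▸ exp_pos _
  have hI_pos : ∀ θ, 0 < ∫ x, q θ x := fun θ => by
    have hqθ : q θ = fun x => exp (∑ i, θ i * φ x i) := funext (hq θ)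
    exact hqθ ▸ integral_exp_pos (hqθ ▸ hq_int θ)
  have hrescale : ∀ θ c, 0 < c → ∃ θ',
      D θ' = D θ - Z * log c ∧ ∫ x, q θ' x = c * ∫ x, q θ x := by
    intro θ c hc
    obtain ⟨θ', hθ'⟩ := hscale θ c hc
    refine ⟨θ', ?_, by simp only [hθ', integral_const_mul]⟩
    simp only [hD, hθ', hZ]
    exact integral_mul_log_div_const_mul hc (fun x => (hq_pos θ x).ne') hp_int (hlog_int θ)
  rw [← min_add_iff_constrained_min_of_rescaling hI_pos hrescale θstar]
  refine forall_congr' fun θ => ?_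
  rw [hDstar, hDstar, sub_add_eq_add_sub, sub_add_eq_add_sub, sub_le_sub_iff_right]

/-- Minimizing the generalized KL divergence `D*(p‖q_θ)` without constraint is equivalent
to minimizing the KL divergence `D(p‖q_θ) = ∫ p log(p/q_θ)` subject to the constraint
`∫ q_θ = Z_p`, for an exponential family closed under multiplication by positive
constants, all integrals being assumed finite. -/
theorem genKL_min_iff_constrained_KL_min {d n : ℕ}
    (p : (Fin d → ℝ) → ℝ) (hp_nonneg : ∀ x, 0 ≤ p x) (hp_int : Integrable p)
    (Z : ℝ) (hZ : Z = ∫ x, p x)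
    (φ : (Fin d → ℝ) → Fin n → ℝ)
    (q : (Fin n → ℝ) → (Fin d → ℝ) → ℝ)
    (hq : ∀ θ x', q θ x' = Real.exp (∑ i, θ i * φ x' i))
    -- the family is closed under multiplication by positive constants
    (hscale : ∀ θ : Fin n → ℝ, ∀ c : ℝ, 0 < c → ∃ θ' : Fin n → ℝ,
      ∀ x', q θ' x' = c * q θ x')
    -- all the integrals below are finite
    (hq_int : ∀ θ, Integrable (q θ))
    (hlog_int : ∀ θ, Integrable (fun x => p x * Real.log (p x / q θ x)))
    (D Dstar : (Fin n → ℝ) → ℝ)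
    (hD : ∀ θ, D θ = ∫ x, p x * Real.log (p x / q θ x))
    (hDstar : ∀ θ, Dstar θ = D θ - (∫ x, p x) + ∫ x, q θ x)
    (θstar : Fin n → ℝ) :
    (∀ θ : Fin n → ℝ, Dstar θstar ≤ Dstar θ) ↔
      ((∫ x, q θstar x) = Z ∧
        ∀ θ : Fin n → ℝ, (∫ x, q θ x) = Z → D θstar ≤ D θ) :=
  genKL_min_iff_constrained_KL_min_general p hp_int Z hZ φ q hq hscale hq_int hlog_int D Dstar hD
    hDstar θstar
end

section
/- Let π be a probability density on ℝ^d with π > 0 on the support of the density p, let φ = (φ₁,…,φₙ) : ℝ^d → ℝ^n with n ≥ 2, and suppose φ₁,…,φₙ are linearly independent as functions on the support of p. Then the importance sampling covariance matrix Σ_IS = ∫ (p(x)²/π(x)) φ(x) φ(x)ᵀ dx − I_p(φ) I_p(φ)ᵀ (assumed finite) has null space of dimension at most one; in particular, at most one eigenvalue of Σ_IS can vanish, whatever the choice of π. -/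
open MeasureTheory
open scoped BigOperators

/-- If `n ≥ 2` and `φ₁,…,φₙ` are linearly independent as functions on the support of the
density `p`, then the importance sampling covariance matrix
`Σ_IS = ∫ (p²/π) φ φᵀ − I_p(φ) I_p(φ)ᵀ` (assumed finite) has null space of dimension at
most one, whatever the instrumental probability density `π` (positive on the support
of `p`); in particular at most one of its eigenvalues can vanish. -/
theorem importance_sampling_covariance_kernel_dim_le_one {d n : ℕ} (hn : 2 ≤ n)
    (π p : (Fin d → ℝ) → ℝ) (φ : (Fin d → ℝ) → Fin n → ℝ)
    (hπ_meas : Measurable π) (hπ_nonneg : ∀ x, 0 ≤ π x)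
    (hπ_prob : ∫ x, π x = 1)
    (hp_meas : Measurable p) (hp_nonneg : ∀ x, 0 ≤ p x) (hp_prob : ∫ x, p x = 1)
    (hφ_meas : Measurable φ)
    -- `π > 0` on the support of `p`
    (hπ_pos : ∀ x, p x ≠ 0 → 0 < π x)
    -- `φ₁,…,φₙ` are linearly independent as functions on the support of `p`
    (hindep : ∀ c : Fin n → ℝ,
      (∀ᵐ x, p x ≠ 0 → ∑ i, c i * φ x i = 0) → c = 0)
    (I : Fin n → ℝ) (hI : I = ∫ x, p x • φ x)
    (hI_int : Integrable (fun x => p x • φ x))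
    -- the covariance matrix, assumed finite
    (Sis : Matrix (Fin n) (Fin n) ℝ)
    (hSis_int : ∀ i j, Integrable (fun x => (p x) ^ 2 / π x * (φ x i * φ x j)))
    (hSis : ∀ i j, Sis i j =
      (∫ x, (p x) ^ 2 / π x * (φ x i * φ x j)) - I i * I j) :
    Module.finrank ℝ (LinearMap.ker (Matrix.toLin' Sis)) ≤ 1 := by
  classical
  -- linear functional c ↦ ⟨c, I⟩
  set F : (Fin n → ℝ) →ₗ[ℝ] ℝ :=
    { toFun := fun c => ∑ i, c i * I i
      map_add' := by
        intro a b; simp [add_mul, Finset.sum_add_distrib]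
      map_smul' := by
        intro r a; simp [Finset.mul_sum, mul_assoc] } with hFdef
  have key : ∀ c ∈ LinearMap.ker (Matrix.toLin' Sis), F c = 0 → c = 0 := by
    intro c hc hFc
    have hmul : Sis.mulVec c = 0 := by
      simpa [Matrix.toLin'_apply] using (LinearMap.mem_ker.mp hc)
    set g : (Fin d → ℝ) → ℝ := fun x => ∑ i, c i * φ x i with hg
    have hpt : ∀ x, (p x) ^ 2 / π x * (g x) ^ 2 =
        ∑ i, ∑ j, c i * c j * ((p x) ^ 2 / π x * (φ x i * φ x j)) := by
      intro x
      have h1 : (g x) ^ 2 = ∑ i, ∑ j, (c i * φ x i) * (c j * φ x j) := by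
        rw [sq, hg, Finset.sum_mul_sum]
      rw [h1, Finset.mul_sum]
      refine Finset.sum_congr rfl fun i _ => ?_
      rw [Finset.mul_sum]
      exact Finset.sum_congr rfl fun j _ => by ring
    have hIeq : ∫ x, (p x) ^ 2 / π x * (g x) ^ 2 =
        ∑ i, ∑ j, c i * c j * ∫ x, (p x) ^ 2 / π x * (φ x i * φ x j) := by
      simp_rw [hpt]
      rw [integral_finset_sum _ (fun i _ => integrable_finset_sum _
        (fun j _ => (hSis_int i j).const_mul _))]
      refine Finset.sum_congr rfl fun i _ => ?_
      rw [integral_finset_sum _ (fun j _ => (hSis_int i j).const_mul _)]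
      exact Finset.sum_congr rfl fun j _ => integral_const_mul _ _
    have hquad : ∑ i, ∑ j, c i * c j * Sis i j = 0 := by
      have h0 : ∀ i, Sis.mulVec c i = 0 := fun i => congrFun hmul i
      calc ∑ i, ∑ j, c i * c j * Sis i j
          = ∑ i, c i * Sis.mulVec c i := by
            refine Finset.sum_congr rfl fun i _ => ?_
            rw [Matrix.mulVec, dotProduct, Finset.mul_sum]
            exact Finset.sum_congr rfl fun j _ => by ring
        _ = 0 := by simp [h0]
    have hII : ∑ i, ∑ j, c i * c j * (I i * I j) = (∑ i, c i * I i) ^ 2 := by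
      rw [sq, Finset.sum_mul_sum]
      refine Finset.sum_congr rfl fun i _ => Finset.sum_congr rfl fun j _ => by ring
    have hexp : ∑ i, ∑ j, c i * c j * Sis i j =
        (∫ x, (p x) ^ 2 / π x * (g x) ^ 2) - (∑ i, c i * I i) ^ 2 := by
      rw [hIeq, ← hII, ← Finset.sum_sub_distrib]
      refine Finset.sum_congr rfl fun i _ => ?_
      rw [← Finset.sum_sub_distrib]
      refine Finset.sum_congr rfl fun j _ => ?_
      rw [hSis i j]; ring
    have hFc' : ∑ i, c i * I i = 0 := hFc
    have hzero : ∫ x, (p x) ^ 2 / π x * (g x) ^ 2 = 0 := by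
      have := hexp.symm.trans hquad
      rw [hFc'] at this
      linarith [this]
    have hnonneg : ∀ x, 0 ≤ (p x) ^ 2 / π x * (g x) ^ 2 := fun x =>
      mul_nonneg (div_nonneg (sq_nonneg _) (hπ_nonneg x)) (sq_nonneg _)
    have hint : Integrable (fun x => (p x) ^ 2 / π x * (g x) ^ 2) := by
      have heq : (fun x => (p x) ^ 2 / π x * (g x) ^ 2) =
          fun x => ∑ i, ∑ j, c i * c j * ((p x) ^ 2 / π x * (φ x i * φ x j)) :=
        funext hpt
      rw [heq]
      exact integrable_finset_sum _ (fun i _ => integrable_finset_sum _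
        (fun j _ => (hSis_int i j).const_mul _))
    have hae : (fun x => (p x) ^ 2 / π x * (g x) ^ 2) =ᵐ[volume] 0 :=
      (integral_eq_zero_iff_of_nonneg hnonneg hint).mp hzero
    refine hindep c ?_
    filter_upwards [hae] with x hx hpx
    have hπx := hπ_pos x hpx
    have hp2 : 0 < (p x) ^ 2 := by positivity
    have hcoef : 0 < (p x) ^ 2 / π x := div_pos hp2 hπx
    have : (g x) ^ 2 = 0 := by
      have hx0 : (p x) ^ 2 / π x * (g x) ^ 2 = 0 := hx
      exact (mul_eq_zero.mp hx0).resolve_left (ne_of_gt hcoef)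
    simpa [hg] using pow_eq_zero_iff (n := 2) (by norm_num) |>.mp this
  -- the restriction of F to the kernel is injective
  set L : (LinearMap.ker (Matrix.toLin' Sis)) →ₗ[ℝ] ℝ :=
    F.comp (LinearMap.ker (Matrix.toLin' Sis)).subtype with hL
  have hinj : Function.Injective L := by
    rw [← LinearMap.ker_eq_bot]
    refine (Submodule.eq_bot_iff _).mpr ?_
    rintro ⟨c, hc⟩ hcL
    have : c = 0 := key c hc (by simpa [hL] using hcL)
    simpa using this
  calc Module.finrank ℝ (LinearMap.ker (Matrix.toLin' Sis))
      ≤ Module.finrank ℝ ℝ := LinearMap.finrank_le_finrank_of_injective hinj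
    _ = 1 := Module.finrank_self ℝ
end
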